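/- There exists a constant C > 0 such that for every integer s ≥ 1, Σ_{ℓ=0}^{⌊6s/7⌋} C(s, ℓ) · 12^ℓ ≤ C · α2^s / √s, where α2 = 7 · 2^{6/7} and C(s, ℓ) denotes the binomial coefficient. -/

import Mathlib

/-!
Below `m = ⌊6s/7⌋` the terms `C(s,ℓ)·12^ℓ` at least double from one index to the next, so the
sum is at most twice its last term. Stirling's bounds on factorials give
`C(s,m)·p^m·q^(s-m) ≤ e/(2π)·√(s/(m(s-m)))` whenever `p + q = 1` (the power part is Gibbs'
inequality, via `x ≤ exp (x - 1)`); with `p = 6/7`, `q = 1/7` this yields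
`C(s,m)·12^m ≤ e/(2π)·√(14/s)·7^s·2^m`, and `2^m ≤ 2^(6s/7)`. The constant is `e√14/π < 4`.
-/

open Real Finset

theorem Finset.sum_range_succ_le_two_mul_of_doubling {R : Type*} [Semiring R] [PartialOrder R]
    [IsOrderedRing R] {f : ℕ → R} {m : ℕ} (h0 : 0 ≤ f 0) (hf : ∀ ℓ < m, 2 * f ℓ ≤ f (ℓ + 1)) :
    ∑ ℓ ∈ range (m + 1), f ℓ ≤ 2 * f m := by
  induction m with
  | zero => simpa [two_mul] using le_add_of_nonneg_left h0
  | succ m ih =>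
    rw [sum_range_succ, two_mul]
    exact add_le_add_left ((ih fun ℓ hℓ => hf ℓ (by omega)).trans (hf m m.lt_succ_self)) _

theorem Nat.mul_choose_mul_pow_le_choose_succ_mul_pow {s ℓ : ℕ} {c x : ℝ} (hx : 0 ≤ x)
    (h : c * (ℓ + 1) ≤ x * (s - ℓ : ℕ)) :
    c * (s.choose ℓ * x ^ ℓ) ≤ s.choose (ℓ + 1) * x ^ (ℓ + 1) := by
  have hrec : (s.choose (ℓ + 1) : ℝ) * (ℓ + 1) = s.choose ℓ * (s - ℓ : ℕ) := by
    exact_mod_cast s.choose_succ_right_eq ℓ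
  refine le_of_mul_le_mul_right ?_ (by positivity : (0 : ℝ) < ℓ + 1)
  calc c * (s.choose ℓ * x ^ ℓ) * (ℓ + 1) = s.choose ℓ * x ^ ℓ * (c * (ℓ + 1)) := by ring
    _ ≤ s.choose ℓ * x ^ ℓ * (x * (s - ℓ : ℕ)) := by gcongr
    _ = s.choose (ℓ + 1) * x ^ (ℓ + 1) * (ℓ + 1) := by
        rw [pow_succ]; linear_combination (-(x ^ ℓ * x)) * hrec

theorem Nat.factorial_le_exp_one_mul_sqrt_mul_pow {n : ℕ} (hn : n ≠ 0) :
    (n.factorial : ℝ) ≤ exp 1 * √n * (n / exp 1) ^ n := by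
  obtain ⟨k, rfl⟩ := Nat.exists_eq_add_one_of_ne_zero hn
  have h : Stirling.stirlingSeq (k + 1) ≤ Stirling.stirlingSeq 1 :=
    Stirling.stirlingSeq'_antitone (Nat.zero_le k)
  rw [Stirling.stirlingSeq_one, Stirling.stirlingSeq,
    div_le_div_iff₀ (by positivity) (by positivity), sqrt_mul (by norm_num)] at h
  have h2 : (0 : ℝ) < √2 := by positivity
  nlinarith

theorem add_pow_add_mul_pow_mul_pow_le_pow_mul_pow {m b : ℕ} (hm : m ≠ 0) (hb : b ≠ 0) {p q : ℝ}
    (hp : 0 ≤ p) (hq : 0 ≤ q) (hpq : p + q = 1) :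
    ((m : ℝ) + b) ^ (m + b) * p ^ m * q ^ b ≤ (m : ℝ) ^ m * (b : ℝ) ^ b := by
  have hm' : (0 : ℝ) < m := by positivity
  have hb' : (0 : ℝ) < b := by positivity
  have key {x : ℝ} (hx : 0 ≤ x) (n : ℕ) : x ^ n ≤ exp (n * (x - 1)) := by
    rw [exp_nat_mul]
    exact pow_le_pow_left₀ hx (by linarith [add_one_le_exp (x - 1)]) n
  have hpm := key (by positivity : 0 ≤ p * (m + b) / m) m
  have hqb := key (by positivity : 0 ≤ q * (m + b) / b) b
  have := mul_le_mul hpm hqb (by positivity) (by positivity)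
  have e : (m : ℝ) * (p * (m + b) / m - 1) + b * (q * (m + b) / b - 1) = 0 := by
    field_simp; linear_combination (m + b : ℝ) * hpq
  rw [← exp_add, e, exp_zero, div_pow, div_pow, div_mul_div_comm,
    div_le_one (by positivity)] at this
  calc ((m : ℝ) + b) ^ (m + b) * p ^ m * q ^ b
      = (p * (m + b)) ^ m * (q * (m + b)) ^ b := by rw [mul_pow, mul_pow, pow_add]; ring
    _ ≤ _ := this

theorem Nat.add_choose_mul_pow_mul_pow_le {m b : ℕ} (hm : m ≠ 0) (hb : b ≠ 0) {p q : ℝ}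
    (hp : 0 ≤ p) (hq : 0 ≤ q) (hpq : p + q = 1) :
    ((m + b).choose m : ℝ) * p ^ m * q ^ b ≤ exp 1 / (2 * π) * √((m + b) / (m * b)) := by
  have hm' : (0 : ℝ) < m := by positivity
  have hb' : (0 : ℝ) < b := by positivity
  have hfac := Nat.factorial_le_exp_one_mul_sqrt_mul_pow (n := m + b) (by omega)
  push_cast at hfac
  rw [Nat.cast_add_choose, div_mul_eq_mul_div, div_mul_eq_mul_div]
  calc ((m + b).factorial : ℝ) * p ^ m * q ^ b / (m.factorial * b.factorial)
      ≤ exp 1 * √(m + b) * ((m + b) / exp 1) ^ (m + b) * p ^ m * q ^ b /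
          (√(2 * π * m) * (m / exp 1) ^ m * (√(2 * π * b) * (b / exp 1) ^ b)) := by
        gcongr
        exacts [Stirling.le_factorial_stirling m, Stirling.le_factorial_stirling b]
    _ = exp 1 / (2 * π) * √((m + b) / (m * b)) *
          (((m : ℝ) + b) ^ (m + b) * p ^ m * q ^ b / ((m : ℝ) ^ m * (b : ℝ) ^ b)) := by
        have h2π : (0 : ℝ) ≤ 2 * π := by positivity
        rw [sqrt_mul h2π, sqrt_mul h2π, sqrt_div' _ (by positivity), sqrt_mul hm'.le, div_pow,
          div_pow, div_pow, pow_add (exp 1)]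
        field_simp
        rw [sq_sqrt h2π]; ring
    _ ≤ exp 1 / (2 * π) * √((m + b) / (m * b)) :=
        mul_le_of_le_one_right (by positivity) <| (div_le_one (by positivity)).2 <|
          add_pow_add_mul_pow_mul_pow_le_pow_mul_pow hm hb hp hq hpq

theorem pow_le_rpow_pow_of_le_mul {x r : ℝ} (hx : 1 ≤ x) {m s : ℕ} (hm : m ≤ r * s) :
    x ^ m ≤ (x ^ r) ^ s := by
  rw [← rpow_natCast, ← rpow_natCast, ← rpow_mul (by positivity)]
  exact rpow_le_rpow_of_exponent_le hx hm

theorem Nat.choose_mul_twelve_pow_le {s : ℕ} (hs : 2 ≤ s) :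
    (s.choose (6 * s / 7) : ℝ) * 12 ^ (6 * s / 7) ≤
      exp 1 * √14 / (2 * π) * (7 * (2 : ℝ) ^ ((6 : ℝ) / 7)) ^ s / √s := by
  set m := 6 * s / 7
  set b := s - m
  have hmb : m + b = s := by omega
  have hs' : (0 : ℝ) < s := by positivity
  have hchoose := Nat.add_choose_mul_pow_mul_pow_le (m := m) (b := b) (by omega) (by omega)
    (p := 6 / 7) (q := 1 / 7) (by norm_num) (by norm_num) (by norm_num)
  rw [← Nat.cast_add, hmb] at hchoose
  have hsqrt : √(s / (m * b)) ≤ √14 / √s := by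
    have hm0 : (0 : ℝ) < m := by exact_mod_cast (by omega : 0 < m)
    have hb0 : (0 : ℝ) < b := by exact_mod_cast (by omega : 0 < b)
    have : s * s ≤ 14 * (m * b) := by
      nlinarith [show s ≤ 2 * m by omega, show s ≤ 7 * b by omega]
    rw [← sqrt_div' _ hs'.le]
    apply Real.sqrt_le_sqrt
    rw [div_le_div_iff₀ (by positivity) hs']
    exact_mod_cast this
  have hpow : (7 : ℝ) ^ s * 2 ^ m ≤ (7 * (2 : ℝ) ^ ((6 : ℝ) / 7)) ^ s := by
    rw [mul_pow]
    gcongr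
    refine pow_le_rpow_pow_of_le_mul (by norm_num) ?_
    have : (7 * m : ℝ) ≤ 6 * s := by exact_mod_cast (by omega : 7 * m ≤ 6 * s)
    linarith
  calc (s.choose m : ℝ) * 12 ^ m
      = (s.choose m * (6 / 7) ^ m * (1 / 7) ^ b) * (7 ^ s * 2 ^ m) := by
        rw [← hmb, pow_add, show (12 : ℝ) = 6 / 7 * 7 * 2 by norm_num, mul_pow, mul_pow]
        field_simp
        rw [mul_assoc, ← mul_pow]
        norm_num
    _ ≤ exp 1 / (2 * π) * √(s / (m * b)) * (7 * (2 : ℝ) ^ ((6 : ℝ) / 7)) ^ s := by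
        gcongr
    _ ≤ exp 1 / (2 * π) * (√14 / √s) * (7 * (2 : ℝ) ^ ((6 : ℝ) / 7)) ^ s := by gcongr
    _ = exp 1 * √14 / (2 * π) * (7 * (2 : ℝ) ^ ((6 : ℝ) / 7)) ^ s / √s := by ring

/-- There is a constant `C > 0` such that for every `s ≥ 1`,
`∑_{ℓ=0}^{⌊6s/7⌋} C(s,ℓ)·12^ℓ ≤ C·α₂^s/√s`, where `α₂ = 7·2^{6/7}`. -/
theorem binomial_sum_12_bound :
    ∃ C : ℝ, 0 < C ∧ ∀ s : ℕ, 1 ≤ s →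
      (∑ ℓ ∈ Finset.range (6 * s / 7 + 1),
          (Nat.choose s ℓ * 12 ^ ℓ : ℝ)) ≤
        C * (7 * (2 : ℝ) ^ ((6 : ℝ) / 7)) ^ s / Real.sqrt s := by
  refine ⟨4, by norm_num, fun s hs => ?_⟩
  have hα : 1 ≤ (2 : ℝ) ^ ((6 : ℝ) / 7) := one_le_rpow (by norm_num) (by norm_num)
  obtain rfl | hs := hs.eq_or_lt
  · norm_num
    linarith
  have hconst : exp 1 * √14 ≤ 4 * π := by
    have h14 : √14 ≤ 3.75 := sqrt_le_iff.2 ⟨by norm_num, by norm_num⟩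
    nlinarith [exp_one_lt_d9, pi_gt_d2, exp_pos 1, sqrt_nonneg 14]
  calc ∑ ℓ ∈ range (6 * s / 7 + 1), (s.choose ℓ * 12 ^ ℓ : ℝ)
      ≤ 2 * (s.choose (6 * s / 7) * 12 ^ (6 * s / 7)) := by
        refine sum_range_succ_le_two_mul_of_doubling (by positivity) fun ℓ hℓ =>
          Nat.mul_choose_mul_pow_le_choose_succ_mul_pow (by norm_num) ?_
        exact_mod_cast (by omega : 2 * (ℓ + 1) ≤ 12 * (s - ℓ))
    _ ≤ 2 * (exp 1 * √14 / (2 * π) * (7 * (2 : ℝ) ^ ((6 : ℝ) / 7)) ^ s / √s) := by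
        gcongr
        exact Nat.choose_mul_twelve_pow_le hs
    _ = exp 1 * √14 / π * (7 * (2 : ℝ) ^ ((6 : ℝ) / 7)) ^ s / √s := by
        field_simp
    _ ≤ 4 * (7 * (2 : ℝ) ^ ((6 : ℝ) / 7)) ^ s / √s := by
        gcongr
        rwa [div_le_iff₀ pi_pos]
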